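/- arXiv:2007.12730 — 2 statements merged into one kernel-verified Lean document; each statement's English description precedes it below -/
import Mathlib

section
/- Let s ∈ ℤ and set z = t(1+(1-s)t)^{1-s} ∈ ℚ[[t]]. Define V_s(z) = (1+(1-s)t)^{1-s}(1+(2-s)t)^s and W_s(z) = (1+(1-s)t)^{(s/2)-1}(1+(2-s)t)^{(1-s)/2}, as formal power series in z (via inverting the variable change; fractional powers are defined since the series have constant term 1). Then V_s(z)·W_s(z)² = 1 + v where v = t(1-(s-1)t)^{-1}, and moreover the substitution w = v(1+v)^{(s-1)²-1} transforms z-series to w-series consistently, i.e. g_{s-1}(w) = V_s(z)W_s(z)² under w = v(1+v)^{(s-1)²-1}, z = t(1+(1-s)t)^{1-s}, v = t(1-(s-1)t)^{-1}. -/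
/-- The formal variable `t`, as an element of the field `ℚ((t))` of Laurent series. -/
noncomputable def tVar : LaurentSeries ℚ := HahnSeries.single 1 1

/-! With `A = 1 + (1-s)t` and `B = 1 + (2-s)t = A + t`, the exponents of `A` and of `B` in
`V_s W_s²` add up to `-1` and `1`, so the product is `B / A = 1 + t / A`, and
`A = 1 - (s-1)t` is exactly the denominator of `v`. -/

lemma intCast_mul_tVar (n : ℤ) : (n : LaurentSeries ℚ) * tVar = HahnSeries.single 1 (n : ℚ) := by
  rw [tVar, ← map_intCast (HahnSeries.C : ℚ →+* LaurentSeries ℚ), HahnSeries.C_apply,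
    HahnSeries.single_mul_single, zero_add, mul_one]

lemma HahnSeries.one_add_single_one_ne_zero {R : Type*} [Semiring R] [Nontrivial R] (a : R) :
    (1 : LaurentSeries R) + HahnSeries.single 1 a ≠ 0 := by
  intro h
  simpa [HahnSeries.coeff_one] using congrArg (HahnSeries.coeff · 0) h

lemma one_add_intCast_mul_tVar_ne_zero (n : ℤ) : 1 + (n : LaurentSeries ℚ) * tVar ≠ 0 := by
  rw [intCast_mul_tVar]
  exact HahnSeries.one_add_single_one_ne_zero _

lemma zpow_mul_zpow_segre_verlinde {K : Type*} [Field K] {A B : K} (hA : A ≠ 0) (hB : B ≠ 0)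
    (s : ℤ) : A ^ (1 - s) * B ^ s * (A ^ (s - 2) * B ^ (1 - s)) = B / A := by
  calc A ^ (1 - s) * B ^ s * (A ^ (s - 2) * B ^ (1 - s))
      = A ^ ((1 - s) + (s - 2)) * B ^ (s + (1 - s)) := by
        rw [zpow_add₀ hA, zpow_add₀ hB]; ring
    _ = B / A := by simp [div_eq_mul_inv, mul_comm]

/-- Rank 1 Segre–Verlinde correspondence, first relation: with
`z = t(1+(1-s)t)^(1-s)`, `V_s(z) = (1+(1-s)t)^(1-s) (1+(2-s)t)^s` and
`W_s(z) = (1+(1-s)t)^(s/2-1) (1+(2-s)t)^((1-s)/2)` (so that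
`W_s² = (1+(1-s)t)^(s-2) (1+(2-s)t)^(1-s)`), one has
`V_s(z)·W_s(z)² = 1 + v` where `v = t(1-(s-1)t)⁻¹`; equivalently
`g_{s-1}(w) = V_s(z) W_s(z)²` under `w = v(1+v)^((s-1)²-1)`, since
`g_{s-1}(w) = 1 + v`. Everything is expanded in the variable `t`, working in
the field of formal Laurent series `ℚ((t))`. -/
theorem rank_one_segre_verlinde_g (s : ℤ) (W : LaurentSeries ℚ)
    (hW : W ^ 2 = (1 + (1 - (s : LaurentSeries ℚ)) * tVar) ^ (s - 2) *
        (1 + (2 - (s : LaurentSeries ℚ)) * tVar) ^ (1 - s)) :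
    (1 + (1 - (s : LaurentSeries ℚ)) * tVar) ^ (1 - s) *
        (1 + (2 - (s : LaurentSeries ℚ)) * tVar) ^ s * W ^ 2
      = 1 + tVar * (1 - ((s : LaurentSeries ℚ) - 1) * tVar)⁻¹ := by
  have hA : 1 + (1 - (s : LaurentSeries ℚ)) * tVar ≠ 0 := by
    simpa using one_add_intCast_mul_tVar_ne_zero (1 - s)
  have hB : 1 + (2 - (s : LaurentSeries ℚ)) * tVar ≠ 0 := by
    simpa using one_add_intCast_mul_tVar_ne_zero (2 - s)
  have hA' : 1 - ((s : LaurentSeries ℚ) - 1) * tVar = 1 + (1 - (s : LaurentSeries ℚ)) * tVar := by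
    ring
  rw [hW, zpow_mul_zpow_segre_verlinde hA hB, hA', div_eq_iff hA, add_mul,
    inv_mul_cancel_right₀ hA]
  ring
end

section
/- Let t be a formal variable and v = t(1+t/2)^{-1}. Then the series (1+t) + t^{1/2}(1+3t/4)^{1/2} and 1 + v/2 + v^{1/2}(1+v/4)^{1/2} satisfy the identity ((1+t) + t^{1/2}(1+3t/4)^{1/2}) · (1+t/2)^{-1} = 1 + v/2 + v^{1/2}(1+v/4)^{1/2} in ℚ[[t^{1/2}]]. -/
open PowerSeries

/-- Example 1 (ρ=2) Segre–Verlinde identity: in `ℚ[[t^(1/2)]]` (with `X = t^(1/2)`,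
so `t = X²`), with `v = t(1+t/2)⁻¹`, the principal square roots
`a = (1+3t/4)^(1/2)`, `c = (1+t/2)^(-1/2)` (so `v^(1/2) = X·c`) and
`d = (1+v/4)^(1/2)` (all specified by their squares and constant term `1`), one has
`((1+t) + t^(1/2)(1+3t/4)^(1/2)) · (1+t/2)⁻¹ = 1 + v/2 + v^(1/2)(1+v/4)^(1/2)`,
relating the Segre function `Y₁` and the Verlinde function `A₋₁`. -/
theorem segre_verlinde_example_one (a c d : PowerSeries ℚ)
    (ha : a ^ 2 = 1 + PowerSeries.C (3/4 : ℚ) * PowerSeries.X ^ 2)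
    (ha0 : PowerSeries.constantCoeff a = 1)
    (hc : c ^ 2 = (1 + PowerSeries.C (1/2 : ℚ) * PowerSeries.X ^ 2)⁻¹)
    (hc0 : PowerSeries.constantCoeff c = 1)
    (hd : d ^ 2 = 1 + PowerSeries.C (1/4 : ℚ) *
        (PowerSeries.X ^ 2 * (1 + PowerSeries.C (1/2 : ℚ) * PowerSeries.X ^ 2)⁻¹))
    (hd0 : PowerSeries.constantCoeff d = 1) :
    ((1 + PowerSeries.X ^ 2) + PowerSeries.X * a) *
        (1 + PowerSeries.C (1/2 : ℚ) * PowerSeries.X ^ 2)⁻¹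
      = 1 + PowerSeries.C (1/2 : ℚ) *
            (PowerSeries.X ^ 2 * (1 + PowerSeries.C (1/2 : ℚ) * PowerSeries.X ^ 2)⁻¹) +
          (PowerSeries.X * c) * d := by
  set e : PowerSeries ℚ := 1 + PowerSeries.C (1/2 : ℚ) * PowerSeries.X ^ 2 with he
  set w : PowerSeries ℚ := e⁻¹ with hwdef
  have he0 : PowerSeries.constantCoeff e = 1 := by simp [he]
  have hw : e * w = 1 :=
    PowerSeries.mul_inv_cancel _ (by rw [he0]; norm_num)
  have hC : PowerSeries.C (3/4 : ℚ) = PowerSeries.C (1/2 : ℚ) + PowerSeries.C (1/4 : ℚ) := by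
    rw [← map_add]; norm_num
  have hcde0 : PowerSeries.constantCoeff (c * d * e) = 1 := by
    simp [map_mul, hc0, hd0, he0]
  have hsq : a ^ 2 = (c * d * e) ^ 2 := by
    rw [he]
    linear_combination ha - d^2*e^2*hc - w*e^2*hd
      - (e + PowerSeries.C (1/4 : ℚ) * PowerSeries.X^2 * (e*w+1)) * hw
      + PowerSeries.X^2 * hC
  have hacd : a = c * d * e := by
    have h0 : (a - c * d * e) * (a + c * d * e) = 0 := by linear_combination hsq
    rcases mul_eq_zero.mp h0 with h | h
    · exact sub_eq_zero.mp h
    · exfalso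
      have h2 := congrArg (PowerSeries.constantCoeff) h
      simp [map_add, ha0, hcde0] at h2
  have hC2 : (2:PowerSeries ℚ) * PowerSeries.C (1/2 : ℚ) = 1 := by
    rw [show (2:PowerSeries ℚ) = PowerSeries.C (2 : ℚ) from (map_ofNat _ 2).symm, ← map_mul]
    norm_num
  rw [hacd]
  linear_combination (1 + PowerSeries.X * c * d) * hw - PowerSeries.X^2 * w * hC2
end
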